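/- arXiv:1910.13508 — 4 statements merged into one kernel-verified Lean document; each statement's English description precedes it below -/
import Mathlib

section
/- More precisely, the scaling argument yields: if u solves the heat equation on a ball of radius r (0 < r < 1) around a, then sup_{B_{r²/4}(a)} |∂^k u| ≤ (a_m / r^{2k_t + |k_x|}) · sup_{B_r(a)} |u|, where k_x = (k_1,…,k_m), k_t = k_{m+1}, and a_m is the dimensional constant from the unit-scale estimate; in particular since 2k_t + |k_x| ≤ 2|k|, one also gets the bound a_m / r^{2|k|}. -/
open scoped BigOperators
open Metric

/-- Partial derivative of `f` in the `i`-th coordinate direction. -/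
noncomputable def pd {n : ℕ} {F : Type*} [NormedAddCommGroup F] [NormedSpace ℝ F]
    (i : Fin n) (f : EuclideanSpace ℝ (Fin n) → F) : EuclideanSpace ℝ (Fin n) → F :=
  fun z => fderiv ℝ f z (EuclideanSpace.single i 1)

/-- Iterated partial derivative in the `i`-th coordinate direction. -/
noncomputable def pdIter {n : ℕ} {F : Type*} [NormedAddCommGroup F] [NormedSpace ℝ F]
    (i : Fin n) : ℕ → (EuclideanSpace ℝ (Fin n) → F) → EuclideanSpace ℝ (Fin n) → F
  | 0, f => f
  | k + 1, f => pd i (pdIter i k f)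

/-- The mixed partial derivative `∂^k f` associated to the multiindex `k`. -/
noncomputable def mderiv {n : ℕ} {F : Type*} [NormedAddCommGroup F] [NormedSpace ℝ F]
    (k : Fin n → ℕ) (f : EuclideanSpace ℝ (Fin n) → F) : EuclideanSpace ℝ (Fin n) → F :=
  (List.finRange n).foldr (fun i g => pdIter i (k i) g) f

/-- `u` solves the heat equation `Δu - ∂ₜu = 0` on `Ω ⊆ ℝ^{m+1}`, where the first `m`
coordinates are spatial and the last coordinate is time. -/
def IsHeatSolution {m : ℕ} (Ω : Set (EuclideanSpace ℝ (Fin (m + 1))))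
    (u : EuclideanSpace ℝ (Fin (m + 1)) → ℝ) : Prop :=
  ∀ z ∈ Ω, (∑ i : Fin m, pd i.castSucc (pd i.castSucc u) z) - pd (Fin.last m) u z = 0

/-- The parabolic rescaling `(x, t) ↦ (rx, r²t)` of `ℝ^{m+1}`. -/
noncomputable def parabolicScale (m : ℕ) (r : ℝ) :
    EuclideanSpace ℝ (Fin (m + 1)) → EuclideanSpace ℝ (Fin (m + 1)) :=
  fun z => (WithLp.equiv 2 (Fin (m + 1) → ℝ)).symm
    (fun i => if i = Fin.last m then r ^ 2 * z i else r * z i)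

noncomputable def diagCLM {n : ℕ} (c : Fin n → ℝ) :
    EuclideanSpace ℝ (Fin n) →L[ℝ] EuclideanSpace ℝ (Fin n) :=
  LinearMap.toContinuousLinearMap
  { toFun := fun z => (WithLp.equiv 2 (Fin n → ℝ)).symm (fun i => c i * z i)
    map_add' := by
      intro x y; apply PiLp.ext; intro i
      simp [WithLp.equiv_symm_apply, PiLp.add_apply, mul_add]
    map_smul' := by
      intro s x; apply PiLp.ext; intro i
      simp [WithLp.equiv_symm_apply, PiLp.smul_apply, smul_eq_mul]; ring }

lemma diagCLM_apply {n : ℕ} (c : Fin n → ℝ) (z : EuclideanSpace ℝ (Fin n)) (i : Fin n) :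
    diagCLM c z i = c i * z i := rfl

lemma diagCLM_single {n : ℕ} (c : Fin n → ℝ) (i : Fin n) :
    diagCLM c (EuclideanSpace.single i 1) = c i • EuclideanSpace.single i 1 := by
  apply PiLp.ext; intro j
  simp only [diagCLM_apply, PiLp.smul_apply, EuclideanSpace.single_apply, smul_eq_mul]
  by_cases h : j = i <;> simp [h]

lemma euclid_norm_le {n : ℕ} {x y : EuclideanSpace ℝ (Fin n)} {K : ℝ} (hK : 0 ≤ K)
    (h : ∀ i, |x i| ≤ K * |y i|) : ‖x‖ ≤ K * ‖y‖ := by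
  rw [EuclideanSpace.norm_eq, EuclideanSpace.norm_eq]
  have : √(∑ i, ‖x i‖ ^ 2) ≤ √(K ^ 2 * ∑ i, ‖y i‖ ^ 2) := by
    apply Real.sqrt_le_sqrt
    rw [Finset.mul_sum]
    apply Finset.sum_le_sum
    intro i _
    have := h i
    have : ‖x i‖ ^ 2 ≤ (K * |y i|) ^ 2 := by
      apply sq_le_sq' _ _ <;> rw [Real.norm_eq_abs] <;> nlinarith [abs_nonneg (x i)]
    calc ‖x i‖ ^ 2 ≤ (K * |y i|) ^ 2 := this
      _ = K ^ 2 * ‖y i‖ ^ 2 := by rw [Real.norm_eq_abs]; ring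
  calc √(∑ i, ‖x i‖ ^ 2) ≤ √(K ^ 2 * ∑ i, ‖y i‖ ^ 2) := this
    _ = K * √(∑ i, ‖y i‖ ^ 2) := by
        rw [Real.sqrt_mul (sq_nonneg K), Real.sqrt_sq hK]

section calc_lemmas
variable {n : ℕ}

lemma diffAt_of_contDiffOn {Ω : Set (EuclideanSpace ℝ (Fin n))} {g : EuclideanSpace ℝ (Fin n) → ℝ}
    (hΩ : IsOpen Ω) (hg : ContDiffOn ℝ (⊤ : ℕ∞) g Ω) {z} (hz : z ∈ Ω) : DifferentiableAt ℝ g z :=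
  (hg.differentiableOn (by simp)).differentiableAt (hΩ.mem_nhds hz)

lemma pd_contDiffOn {Ω : Set (EuclideanSpace ℝ (Fin n))} {g : EuclideanSpace ℝ (Fin n) → ℝ}
    (hΩ : IsOpen Ω) (hg : ContDiffOn ℝ (⊤ : ℕ∞) g Ω) (i : Fin n) : ContDiffOn ℝ (⊤ : ℕ∞) (pd i g) Ω := by
  have h1 : ContDiffOn ℝ (⊤ : ℕ∞) (fderiv ℝ g) Ω := hg.fderiv_of_isOpen hΩ (by simp)
  exact h1.clm_apply contDiffOn_const

lemma pdIter_contDiffOn {Ω : Set (EuclideanSpace ℝ (Fin n))} {g : EuclideanSpace ℝ (Fin n) → ℝ}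
    (hΩ : IsOpen Ω) (hg : ContDiffOn ℝ (⊤ : ℕ∞) g Ω) (i : Fin n) (N : ℕ) :
    ContDiffOn ℝ (⊤ : ℕ∞) (pdIter i N g) Ω := by
  induction N with
  | zero => exact hg
  | succ N ih => exact pd_contDiffOn hΩ ih i

lemma pd_congr {h h' : EuclideanSpace ℝ (Fin n) → ℝ} {s : Set (EuclideanSpace ℝ (Fin n))}
    (hs : IsOpen s) (heq : ∀ w ∈ s, h w = h' w) {z} (hz : z ∈ s) : pd i h z = pd i h' z := by
  have : h =ᶠ[nhds z] h' := Filter.eventually_of_mem (hs.mem_nhds hz) heq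
  unfold pd
  rw [this.fderiv_eq]

lemma pdIter_congr {i : Fin n} {h h' : EuclideanSpace ℝ (Fin n) → ℝ}
    {s : Set (EuclideanSpace ℝ (Fin n))} (hs : IsOpen s) (heq : ∀ w ∈ s, h w = h' w) (N : ℕ) :
    ∀ z ∈ s, pdIter i N h z = pdIter i N h' z := by
  induction N with
  | zero => exact heq
  | succ N ih =>
    intro z hz
    exact pd_congr hs ih hz

end calc_lemmas

section scale
variable {n : ℕ} (c : Fin n → ℝ) (a : EuclideanSpace ℝ (Fin n))

lemma fderiv_affine (z : EuclideanSpace ℝ (Fin n)) :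
    fderiv ℝ (fun w => a + diagCLM c w) z = diagCLM c := by
  rw [fderiv_const_add, (diagCLM c).fderiv]

lemma pd_comp {g : EuclideanSpace ℝ (Fin n) → ℝ} {z : EuclideanSpace ℝ (Fin n)}
    (hg : DifferentiableAt ℝ g (a + diagCLM c z)) (i : Fin n) :
    pd i (fun w => g (a + diagCLM c w)) z = c i * pd i g (a + diagCLM c z) := by
  have hT : DifferentiableAt ℝ (fun w => a + diagCLM c w) z :=
    ((diagCLM c).differentiableAt).const_add a
  have hcomp : (fun w => g (a + diagCLM c w)) = g ∘ (fun w => a + diagCLM c w) := rfl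
  unfold pd
  rw [hcomp, fderiv_comp z hg hT, fderiv_affine]
  simp [ContinuousLinearMap.comp_apply, diagCLM_single, map_smul, smul_eq_mul]

lemma pd_const_mul {h : EuclideanSpace ℝ (Fin n) → ℝ} {z : EuclideanSpace ℝ (Fin n)}
    (hh : DifferentiableAt ℝ h z) (C : ℝ) (i : Fin n) :
    pd i (fun w => C * h w) z = C * pd i h z := by
  unfold pd
  rw [fderiv_const_mul hh C]
  simp

lemma pd_scale {Ω : Set (EuclideanSpace ℝ (Fin n))} (hΩ : IsOpen Ω)
    {g : EuclideanSpace ℝ (Fin n) → ℝ} (hg : ContDiffOn ℝ (⊤ : ℕ∞) g Ω)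
    (C : ℝ) (i : Fin n) {z : EuclideanSpace ℝ (Fin n)} (hz : a + diagCLM c z ∈ Ω) :
    pd i (fun w => C * g (a + diagCLM c w)) z = (C * c i) * pd i g (a + diagCLM c z) := by
  have hgT : DifferentiableAt ℝ (fun w => g (a + diagCLM c w)) z := by
    have := (diffAt_of_contDiffOn hΩ hg hz).comp z (((diagCLM c).differentiableAt).const_add a)
    exact this
  rw [pd_const_mul hgT C i, pd_comp c a (diffAt_of_contDiffOn hΩ hg hz) i]
  ring

lemma pdIter_scale {Ω : Set (EuclideanSpace ℝ (Fin n))} (hΩ : IsOpen Ω)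
    {g : EuclideanSpace ℝ (Fin n) → ℝ} (hg : ContDiffOn ℝ (⊤ : ℕ∞) g Ω)
    (C : ℝ) (i : Fin n) (N : ℕ) :
    ∀ z, a + diagCLM c z ∈ Ω →
      pdIter i N (fun w => C * g (a + diagCLM c w)) z
        = (C * c i ^ N) * pdIter i N g (a + diagCLM c z) := by
  induction N with
  | zero => intro z hz; simp [pdIter]
  | succ N ih =>
    intro z hz
    have hopen : IsOpen {w | a + diagCLM c w ∈ Ω} :=
      hΩ.preimage (continuous_const.add (diagCLM c).continuous)
    show pd i (pdIter i N fun w => C * g (a + diagCLM c w)) z = _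
    rw [pd_congr (h' := fun w => (C * c i ^ N) * pdIter i N g (a + diagCLM c w)) hopen
        (fun w hw => ih w hw) hz,
      pd_scale c a hΩ (pdIter_contDiffOn hΩ hg i N) (C * c i ^ N) i hz]
    show _ = (C * c i ^ (N + 1)) * pd i (pdIter i N g) (a + diagCLM c z)
    ring

end scale


section foldr
variable {n : ℕ} (c : Fin n → ℝ) (a : EuclideanSpace ℝ (Fin n)) (k : Fin n → ℕ)

lemma foldr_contDiffOn {Ω : Set (EuclideanSpace ℝ (Fin n))} (hΩ : IsOpen Ω)
    {f : EuclideanSpace ℝ (Fin n) → ℝ} (hf : ContDiffOn ℝ (⊤ : ℕ∞) f Ω) (l : List (Fin n)) :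
    ContDiffOn ℝ (⊤ : ℕ∞) (l.foldr (fun i g => pdIter i (k i) g) f) Ω := by
  induction l with
  | nil => exact hf
  | cons i l ih => exact pdIter_contDiffOn hΩ ih i (k i)

lemma foldr_scale {Ω : Set (EuclideanSpace ℝ (Fin n))} (hΩ : IsOpen Ω)
    {f : EuclideanSpace ℝ (Fin n) → ℝ} (hf : ContDiffOn ℝ (⊤ : ℕ∞) f Ω) (C : ℝ) (l : List (Fin n)) :
    ∀ z, a + diagCLM c z ∈ Ω →
      l.foldr (fun i g => pdIter i (k i) g) (fun w => C * f (a + diagCLM c w)) z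
        = (C * (l.map (fun j => c j ^ k j)).prod)
          * l.foldr (fun i g => pdIter i (k i) g) f (a + diagCLM c z) := by
  induction l with
  | nil => intro z hz; simp
  | cons i l ih =>
    intro z hz
    have hopen : IsOpen {w | a + diagCLM c w ∈ Ω} :=
      hΩ.preimage (continuous_const.add (diagCLM c).continuous)
    show pdIter i (k i) (l.foldr (fun i g => pdIter i (k i) g)
        (fun w => C * f (a + diagCLM c w))) z = _
    rw [pdIter_congr (h' := fun w => (C * (l.map (fun j => c j ^ k j)).prod)
          * l.foldr (fun i g => pdIter i (k i) g) f (a + diagCLM c w)) hopen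
        (fun w hw => ih w hw) (k i) z hz,
      pdIter_scale c a hΩ (foldr_contDiffOn k hΩ hf l) _ i (k i) z hz]
    simp only [List.map_cons, List.prod_cons]
    show _ = _ * pdIter i (k i) (l.foldr (fun i g => pdIter i (k i) g) f) (a + diagCLM c z)
    ring

lemma mderiv_scale {Ω : Set (EuclideanSpace ℝ (Fin n))} (hΩ : IsOpen Ω)
    {f : EuclideanSpace ℝ (Fin n) → ℝ} (hf : ContDiffOn ℝ (⊤ : ℕ∞) f Ω)
    {z : EuclideanSpace ℝ (Fin n)} (hz : a + diagCLM c z ∈ Ω) :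
    mderiv k (fun w => f (a + diagCLM c w)) z
      = (∏ j, c j ^ k j) * mderiv k f (a + diagCLM c z) := by
  have h1 : (fun w => f (a + diagCLM c w)) = (fun w => 1 * f (a + diagCLM c w)) := by
    funext w; ring
  unfold mderiv
  rw [h1, foldr_scale c a k hΩ hf 1 (List.finRange n) z hz, Fin.prod_univ_def]
  ring

end foldr

/-- Sharper scaling estimate: if `a_m ≥ 1` is a constant for which the unit-scale interior
estimate `sup_{B_{1/4}}|∂^k v| ≤ a_m sup_{B_1}|v|` holds for all heat solutions `v` and all
multiindices with `|k| ≤ 2`, and `u` solves the heat equation on a neighborhood of the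
closed ball of radius `r` (`0 < r < 1`) around `a`, then
`sup_{B_{r²/4}(a)} |∂^k u| ≤ (a_m / r^{2k_t + |k_x|}) · sup_{B_r(a)} |u|`;
in particular, since `2k_t + |k_x| ≤ 2|k|`, also `sup_{B_{r²/4}(a)} |∂^k u| ≤ (a_m / r^{2|k|}) · sup_{B_r(a)} |u|`. -/
theorem heat_scaling_derivative_estimate (m : ℕ) (a_m : ℝ) (ha : 1 ≤ a_m)
    (hunit : ∀ (Ω : Set (EuclideanSpace ℝ (Fin (m + 1))))
        (v : EuclideanSpace ℝ (Fin (m + 1)) → ℝ),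
        IsOpen Ω → closedBall (0 : EuclideanSpace ℝ (Fin (m + 1))) 1 ⊆ Ω →
        ContDiffOn ℝ (⊤ : ℕ∞) v Ω → IsHeatSolution Ω v →
        ∀ k : Fin (m + 1) → ℕ, (∑ i, k i) ≤ 2 →
        ∀ M : ℝ, (∀ z ∈ ball (0 : EuclideanSpace ℝ (Fin (m + 1))) 1, |v z| ≤ M) →
        ∀ z ∈ ball (0 : EuclideanSpace ℝ (Fin (m + 1))) (1 / 4), |mderiv k v z| ≤ a_m * M)
    (Ω : Set (EuclideanSpace ℝ (Fin (m + 1)))) (u : EuclideanSpace ℝ (Fin (m + 1)) → ℝ)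
    (hΩ : IsOpen Ω) (hu : ContDiffOn ℝ (⊤ : ℕ∞) u Ω) (hheat : IsHeatSolution Ω u)
    (r : ℝ) (hr0 : 0 < r) (hr1 : r < 1)
    (a : EuclideanSpace ℝ (Fin (m + 1))) (hball : closedBall a r ⊆ Ω)
    (k : Fin (m + 1) → ℕ) (hk : (∑ i, k i) ≤ 2)
    (M : ℝ) (hM : ∀ z ∈ ball a r, |u z| ≤ M) :
    (∀ z ∈ ball a (r ^ 2 / 4),
        |mderiv k u z| ≤ (a_m / r ^ (2 * k (Fin.last m) + ∑ i : Fin m, k i.castSucc)) * M) ∧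
    (∀ z ∈ ball a (r ^ 2 / 4),
        |mderiv k u z| ≤ (a_m / r ^ (2 * ∑ i, k i)) * M) := by
  set c : Fin (m + 1) → ℝ := fun i => if i = Fin.last m then r ^ 2 else r with hc
  have hc_pos : ∀ i, 0 < c i := by
    intro i; by_cases h : i = Fin.last m <;> simp [hc, h] <;> nlinarith
  have hc_le_r : ∀ i, c i ≤ r := by
    intro i; by_cases h : i = Fin.last m <;> simp [hc, h]; nlinarith
  have hr2_le_c : ∀ i, r ^ 2 ≤ c i := by
    intro i; by_cases h : i = Fin.last m <;> simp [hc, h]; nlinarith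
  have hcs : ∀ i : Fin m, c i.castSucc = r := fun i => if_neg (Fin.castSucc_lt_last i).ne
  have hcl : c (Fin.last m) = r ^ 2 := if_pos rfl
  -- the rescaled function
  set v : EuclideanSpace ℝ (Fin (m + 1)) → ℝ := fun w => u (a + diagCLM c w) with hv_def
  set Ω' : Set (EuclideanSpace ℝ (Fin (m + 1))) := {w | a + diagCLM c w ∈ Ω} with hΩ'_def
  have hopen' : IsOpen Ω' := hΩ.preimage (continuous_const.add (diagCLM c).continuous)
  -- norm estimate for the scaling map
  have hLnorm : ∀ z : EuclideanSpace ℝ (Fin (m + 1)), ‖diagCLM c z‖ ≤ r * ‖z‖ := by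
    intro z
    apply euclid_norm_le hr0.le
    intro i
    rw [diagCLM_apply, abs_mul, abs_of_pos (hc_pos i)]
    exact mul_le_mul_of_nonneg_right (hc_le_r i) (abs_nonneg _)
  have hdistTa : ∀ z : EuclideanSpace ℝ (Fin (m + 1)),
      dist (a + diagCLM c z) a = ‖diagCLM c z‖ := by
    intro z; rw [dist_eq_norm, add_sub_cancel_left]
  have hsub1 : closedBall (0 : EuclideanSpace ℝ (Fin (m + 1))) 1 ⊆ Ω' := by
    intro z hz
    rw [mem_closedBall, dist_zero_right] at hz
    apply hball
    rw [mem_closedBall, hdistTa]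
    calc ‖diagCLM c z‖ ≤ r * ‖z‖ := hLnorm z
      _ ≤ r * 1 := by nlinarith
      _ = r := mul_one r
  -- smoothness of v
  have hT_smooth : ContDiff ℝ (⊤ : ℕ∞) (fun w : EuclideanSpace ℝ (Fin (m + 1)) => a + diagCLM c w) :=
    contDiff_const.add (diagCLM c).contDiff
  have hv : ContDiffOn ℝ (⊤ : ℕ∞) v Ω' := hu.comp hT_smooth.contDiffOn (fun w hw => hw)
  -- v is a heat solution on Ω'
  have hheat' : IsHeatSolution Ω' v := by
    intro z hz
    have hz' : a + diagCLM c z ∈ Ω := hz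
    have hveq : v = fun w => 1 * u (a + diagCLM c w) := by
      funext w; rw [hv_def]; ring
    have h2 : ∀ j : Fin (m + 1), pd j (pd j v) z = c j ^ 2 * pd j (pd j u) (a + diagCLM c z) := by
      intro j
      have hs := pdIter_scale c a hΩ hu 1 j 2 z hz'
      rw [one_mul] at hs
      show pdIter j 2 v z = c j ^ 2 * pdIter j 2 u (a + diagCLM c z)
      rw [hveq]
      exact hs
    have h1 : pd (Fin.last m) v z = c (Fin.last m) * pd (Fin.last m) u (a + diagCLM c z) := by
      have hs := pdIter_scale c a hΩ hu 1 (Fin.last m) 1 z hz'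
      rw [one_mul, pow_one] at hs
      show pdIter (Fin.last m) 1 v z = c (Fin.last m) * pdIter (Fin.last m) 1 u (a + diagCLM c z)
      rw [hveq]
      exact hs
    have hheq := hheat (a + diagCLM c z) hz'
    calc (∑ i : Fin m, pd i.castSucc (pd i.castSucc v) z) - pd (Fin.last m) v z
        = (∑ i : Fin m, r ^ 2 * pd i.castSucc (pd i.castSucc u) (a + diagCLM c z))
          - r ^ 2 * pd (Fin.last m) u (a + diagCLM c z) := by
          rw [h1, hcl]
          congr 1
          apply Finset.sum_congr rfl
          intro i _
          rw [h2 i.castSucc, hcs i]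
      _ = r ^ 2 * ((∑ i : Fin m, pd i.castSucc (pd i.castSucc u) (a + diagCLM c z))
          - pd (Fin.last m) u (a + diagCLM c z)) := by rw [mul_sub, Finset.mul_sum]
      _ = 0 := by rw [hheq, mul_zero]
  -- sup bound for v on the unit ball
  have hM' : ∀ z ∈ ball (0 : EuclideanSpace ℝ (Fin (m + 1))) 1, |v z| ≤ M := by
    intro z hz
    rw [mem_ball, dist_zero_right] at hz
    apply hM
    rw [mem_ball, hdistTa]
    calc ‖diagCLM c z‖ ≤ r * ‖z‖ := hLnorm z
      _ < r * 1 := by nlinarith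
      _ = r := mul_one r
  have key := hunit Ω' v hopen' hsub1 hv hheat' k hk M hM'
  -- the product of scaling factors
  set e : ℕ := 2 * k (Fin.last m) + ∑ i : Fin m, k i.castSucc with he_def
  have hprod : (∏ j, c j ^ k j) = r ^ e := by
    rw [Fin.prod_univ_castSucc]
    have : ∀ i : Fin m, c i.castSucc ^ k i.castSucc = r ^ k i.castSucc := by
      intro i; rw [hcs i]
    rw [Finset.prod_congr rfl (fun i _ => this i), Finset.prod_pow_eq_pow_sum, hcl,
      ← pow_mul, ← pow_add, he_def]
    ring_nf
  have hre_pos : (0 : ℝ) < r ^ e := pow_pos hr0 e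
  -- first inequality
  have main1 : ∀ z ∈ ball a (r ^ 2 / 4), |mderiv k u z| ≤ (a_m / r ^ e) * M := by
    intro z hz
    have hzΩ : z ∈ Ω := by
      apply hball
      apply closedBall_subset_closedBall (show r ^ 2 / 4 ≤ r by nlinarith)
      exact ball_subset_closedBall hz
    set w : EuclideanSpace ℝ (Fin (m + 1)) :=
      (WithLp.equiv 2 (Fin (m + 1) → ℝ)).symm (fun i => (z i - a i) / c i) with hw_def
    have hw_apply : ∀ i, w i = (z i - a i) / c i := fun i => rfl
    have hTw : a + diagCLM c w = z := by
      apply PiLp.ext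
      intro i
      rw [PiLp.add_apply, diagCLM_apply, hw_apply i]
      rw [mul_comm, div_mul_cancel₀ _ (hc_pos i).ne']; ring
    have hwΩ' : a + diagCLM c w ∈ Ω := by rw [hTw]; exact hzΩ
    have hwball : w ∈ ball (0 : EuclideanSpace ℝ (Fin (m + 1))) (1 / 4) := by
      rw [mem_ball, dist_zero_right]
      have hza : ‖z - a‖ < r ^ 2 / 4 := by
        rw [← dist_eq_norm]; exact hz
      have hwle : ‖w‖ ≤ (1 / r ^ 2) * ‖z - a‖ := by
        apply euclid_norm_le (by positivity)
        intro i
        have h1 : |w i| = |z i - a i| / c i := by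
          rw [hw_apply i, abs_div, abs_of_pos (hc_pos i)]
        rw [h1, PiLp.sub_apply]
        calc |z i - a i| / c i ≤ |z i - a i| / r ^ 2 :=
              div_le_div_of_nonneg_left (abs_nonneg _) (by positivity) (hr2_le_c i)
          _ = 1 / r ^ 2 * |z i - a i| := by ring
      calc ‖w‖ ≤ (1 / r ^ 2) * ‖z - a‖ := hwle
        _ < (1 / r ^ 2) * (r ^ 2 / 4) := by
            apply mul_lt_mul_of_pos_left hza (by positivity)
        _ = 1 / 4 := by field_simp
    have hscale := mderiv_scale c a k hΩ hu hwΩ'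
    rw [hTw, hprod] at hscale
    have hb := key w hwball
    rw [hv_def, hscale, abs_mul, abs_of_pos hre_pos] at hb
    rw [div_mul_eq_mul_div, le_div_iff₀ hre_pos]
    linarith [hb]
  constructor
  · exact main1
  · intro z hz
    have hM0 : 0 ≤ M := le_trans (abs_nonneg _) (hM a (mem_ball_self hr0))
    have hele : e ≤ 2 * ∑ i, k i := by
      rw [he_def, Fin.sum_univ_castSucc]
      omega
    have hpow : r ^ (2 * ∑ i, k i) ≤ r ^ e :=
      pow_le_pow_of_le_one hr0.le hr1.le hele
    have hdivle : a_m / r ^ e ≤ a_m / r ^ (2 * ∑ i, k i) := by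
      apply div_le_div_of_nonneg_left (by linarith) (by positivity) hpow
    calc |mderiv k u z| ≤ (a_m / r ^ e) * M := main1 z hz
      _ ≤ (a_m / r ^ (2 * ∑ i, k i)) * M := mul_le_mul_of_nonneg_right hdivle hM0
end

section
/- If A is an invertible real (m+1)×(m+1) matrix satisfying ‖A‖ ≤ K·|det A|^{1/(m+1)}, then the largest singular value satisfies Λ(A) ≤ K^{m+1}·λ(A), where λ(A) and Λ(A) are the smallest and largest singular values of A. -/
/-!
`Λ(A)²` is one eigenvalue of `AᵀA`, whose eigenvalues are nonnegative and sum to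
`trace (AᵀA) = ‖A‖²`, so `Λ(A) ≤ ‖A‖`; their product is `det (AᵀA) = (det A)²`, so
`|det A| ≤ λ(A) Λ(A)^m`. Hence
`Λ^(m+1) ≤ ‖A‖^(m+1) ≤ K^(m+1) |det A| ≤ K^(m+1) λ Λ^m`, and cancelling `Λ^m` gives the claim.
-/

/-- `λ(A)`: the smallest singular value of `A` (square root of the minimum eigenvalue of
`AᵀA`; for real matrices `Aᴴ = Aᵀ`). -/
noncomputable def smallestSingularValue {m : ℕ} (A : Matrix (Fin (m + 1)) (Fin (m + 1)) ℝ) : ℝ :=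
  Real.sqrt (⨅ i, (Matrix.isHermitian_conjTranspose_mul_self A).eigenvalues i)

/-- `Λ(A)`: the largest singular value of `A` (square root of the maximum eigenvalue of
`AᵀA`). -/
noncomputable def largestSingularValue {m : ℕ} (A : Matrix (Fin (m + 1)) (Fin (m + 1)) ℝ) : ℝ :=
  Real.sqrt (⨆ i, (Matrix.isHermitian_conjTranspose_mul_self A).eigenvalues i)

/-- The Frobenius norm of a matrix. -/
noncomputable def frobeniusNorm {m : ℕ} (A : Matrix (Fin (m + 1)) (Fin (m + 1)) ℝ) : ℝ :=
  Real.sqrt (∑ i, ∑ j, (A i j) ^ 2)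

theorem prod_le_iInf_mul_iSup_pow {ι : Type*} [Fintype ι] [Nonempty ι] {s : ι → ℝ}
    (hs : ∀ i, 0 ≤ s i) :
    ∏ i, s i ≤ (⨅ i, s i) * (⨆ i, s i) ^ (Fintype.card ι - 1) := by
  classical
  obtain ⟨i₀, hi₀⟩ := Finite.exists_min s
  have hinf : (⨅ i, s i) = s i₀ :=
    le_antisymm (ciInf_le (Finite.bddBelow_range s) i₀) (le_ciInf hi₀)
  rw [← Finset.mul_prod_erase Finset.univ s (Finset.mem_univ i₀), hinf]
  refine mul_le_mul_of_nonneg_left ?_ (hs i₀)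
  calc ∏ i ∈ Finset.univ.erase i₀, s i ≤ ∏ _i ∈ Finset.univ.erase i₀, ⨆ i, s i :=
        Finset.prod_le_prod (fun i _ => hs i) fun i _ => le_ciSup (Finite.bddAbove_range s) i
    _ = (⨆ i, s i) ^ (Fintype.card ι - 1) := by
        rw [Finset.prod_const, Finset.card_erase_of_mem (Finset.mem_univ i₀), Finset.card_univ]

namespace Matrix

variable {n : Type*} [Fintype n] [DecidableEq n]

theorem sum_eigenvalues_conjTranspose_mul_self (A : Matrix n n ℝ) :
    ∑ i, (isHermitian_conjTranspose_mul_self A).eigenvalues i = ∑ i, ∑ j, A i j ^ 2 := by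
  have h := (isHermitian_conjTranspose_mul_self A).trace_eq_sum_eigenvalues
  simp only [RCLike.ofReal_real_eq_id, id] at h
  rw [← h, trace, Finset.sum_comm]
  simp [mul_apply, sq]

theorem prod_eigenvalues_conjTranspose_mul_self (A : Matrix n n ℝ) :
    ∏ i, (isHermitian_conjTranspose_mul_self A).eigenvalues i = A.det ^ 2 := by
  have h := (isHermitian_conjTranspose_mul_self A).det_eq_prod_eigenvalues
  simp only [RCLike.ofReal_real_eq_id, id] at h
  rw [← h, det_mul, det_conjTranspose, star_trivial, sq]

end Matrix

theorem smallestSingularValue_nonneg {m : ℕ} (A : Matrix (Fin (m + 1)) (Fin (m + 1)) ℝ) :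
    0 ≤ smallestSingularValue A :=
  Real.sqrt_nonneg _

theorem largestSingularValue_nonneg {m : ℕ} (A : Matrix (Fin (m + 1)) (Fin (m + 1)) ℝ) :
    0 ≤ largestSingularValue A :=
  Real.sqrt_nonneg _

theorem largestSingularValue_le_frobeniusNorm {m : ℕ}
    (A : Matrix (Fin (m + 1)) (Fin (m + 1)) ℝ) :
    largestSingularValue A ≤ frobeniusNorm A := by
  refine Real.sqrt_le_sqrt (ciSup_le fun i => ?_)
  rw [← A.sum_eigenvalues_conjTranspose_mul_self]
  exact Finset.single_le_sum (fun j _ => A.eigenvalues_conjTranspose_mul_self_nonneg j)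
    (Finset.mem_univ i)

theorem abs_det_le_smallestSingularValue_mul_largestSingularValue_pow {m : ℕ}
    (A : Matrix (Fin (m + 1)) (Fin (m + 1)) ℝ) :
    |A.det| ≤ smallestSingularValue A * largestSingularValue A ^ m := by
  have hs := A.eigenvalues_conjTranspose_mul_self_nonneg
  have hsup : 0 ≤ ⨆ i, (Matrix.isHermitian_conjTranspose_mul_self A).eigenvalues i :=
    (hs 0).trans (le_ciSup (Finite.bddAbove_range _) 0)
  have hprod := prod_le_iInf_mul_iSup_pow hs
  rw [A.prod_eigenvalues_conjTranspose_mul_self, Fintype.card_fin, Nat.add_sub_cancel] at hprod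
  rw [← pow_le_pow_iff_left₀ (abs_nonneg _) (mul_nonneg (smallestSingularValue_nonneg A)
      (pow_nonneg (largestSingularValue_nonneg A) _)) two_ne_zero,
    sq_abs, mul_pow, ← pow_mul, mul_comm m, pow_mul, smallestSingularValue, largestSingularValue,
    Real.sq_sqrt (le_ciInf hs), Real.sq_sqrt hsup]
  exact hprod

theorem le_of_pow_succ_le_mul_pow {x c : ℝ} {m : ℕ} (hx : 0 ≤ x) (hc : 0 ≤ c)
    (h : x ^ (m + 1) ≤ c * x ^ m) : x ≤ c := by
  rcases hx.eq_or_lt with rfl | hx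
  · exact hc
  · rw [pow_succ] at h
    exact le_of_mul_le_mul_left (by linarith) (pow_pos hx m)

theorem largestSV_le_pow_succ_of_takahashi_general {m : ℕ} (A : Matrix (Fin (m + 1)) (Fin (m + 1)) ℝ)
    (K : ℝ) (hK : 1 ≤ K)
    (hT : frobeniusNorm A ≤ K * |A.det| ^ ((1 : ℝ) / (m + 1))) :
    largestSingularValue A ≤ K ^ (m + 1) * smallestSingularValue A := by
  have hK₀ : 0 ≤ K := zero_le_one.trans hK
  have hroot : (|A.det| ^ ((1 : ℝ) / (m + 1))) ^ (m + 1) = |A.det| := by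
    rw [one_div, ← Nat.cast_succ]
    exact Real.rpow_inv_natCast_pow (abs_nonneg _) m.succ_ne_zero
  refine le_of_pow_succ_le_mul_pow (m := m) (largestSingularValue_nonneg A)
    (mul_nonneg (pow_nonneg hK₀ _) (smallestSingularValue_nonneg A)) ?_
  calc largestSingularValue A ^ (m + 1)
      ≤ (K * |A.det| ^ ((1 : ℝ) / (m + 1))) ^ (m + 1) :=
        pow_le_pow_left₀ (largestSingularValue_nonneg A)
          ((largestSingularValue_le_frobeniusNorm A).trans hT) _
    _ = K ^ (m + 1) * |A.det| := by rw [mul_pow, hroot]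
    _ ≤ K ^ (m + 1) * (smallestSingularValue A * largestSingularValue A ^ m) :=
        mul_le_mul_of_nonneg_left
          (abs_det_le_smallestSingularValue_mul_largestSingularValue_pow A) (by positivity)
    _ = K ^ (m + 1) * smallestSingularValue A * largestSingularValue A ^ m := (mul_assoc ..).symm

/-- If `A` is an invertible real `(m+1)×(m+1)` matrix with `‖A‖ ≤ K·|det A|^{1/(m+1)}`
(Frobenius norm, `K ≥ 1`), then `Λ(A) ≤ K^{m+1} · λ(A)`. -/
theorem largestSV_le_pow_succ_of_takahashi {m : ℕ} (A : Matrix (Fin (m + 1)) (Fin (m + 1)) ℝ)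
    (hA : IsUnit A) (K : ℝ) (hK : 1 ≤ K)
    (hT : frobeniusNorm A ≤ K * |A.det| ^ ((1 : ℝ) / (m + 1))) :
    largestSingularValue A ≤ K ^ (m + 1) * smallestSingularValue A :=
  largestSV_le_pow_succ_of_takahashi_general A K hK hT
end

section
/- For γ > 1, the number r_γ defined by r_γ ∏_{j=1}^∞ (1 + γ^{−j}) = 1 satisfies log r_γ ≥ −1/(γ−1) + (1/2)·1/(γ²−1) − (1/3)·1/(γ³−1), and hence r_γ ≥ exp(−1/(γ−1) + (1/2)/(γ²−1) − (1/3)/(γ³−1)). -/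
/-!
Write `r⁻¹ = ∏ (1 + x_j)` with `x_j = γ^{-(j+1)}`, so that `-log r = ∑ log (1 + x_j)`.
Bounding each term by `x_j - x_j²/2 + x_j³/3` and summing the three geometric series
`∑ x_j^k = 1/(γ^k - 1)` gives the bound on `log r`, and exponentiating gives the bound on `r`.
-/

open Real

namespace Real

/-- Compare derivatives: `(1 + t) (1 - t + t²) = 1 + t³ ≥ 1` for `t ≥ 0`. -/
lemma log_one_add_le_cubic {x : ℝ} (hx : 0 ≤ x) :
    log (1 + x) ≤ x - x ^ 2 / 2 + x ^ 3 / 3 := by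
  let g : ℝ → ℝ := fun t => t - t ^ 2 / 2 + t ^ 3 / 3 - log (1 + t)
  have hderiv : ∀ t ∈ Set.Ioi (0 : ℝ), HasDerivAt g (1 - t + t ^ 2 - 1 / (1 + t)) t := by
    intro t ht
    have hlog : HasDerivAt (fun t : ℝ => log (1 + t)) (1 / (1 + t)) t := by
      simpa using ((hasDerivAt_id t).const_add 1).log (by simp only [id]; linarith [ht.out])
    have hpoly : HasDerivAt (fun t : ℝ => t - t ^ 2 / 2 + t ^ 3 / 3) (1 - t + t ^ 2) t := by
      refine (((hasDerivAt_id t).sub ((hasDerivAt_pow 2 t).div_const 2)).add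
        ((hasDerivAt_pow 3 t).div_const 3)).congr_deriv ?_
      norm_num
    exact hpoly.sub hlog
  have hmono : MonotoneOn g (Set.Ici 0) := by
    refine monotoneOn_of_hasDerivWithinAt_nonneg (convex_Ici 0) ?_
      (fun t ht => (hderiv t (by simpa using ht)).hasDerivWithinAt) ?_
    · refine ContinuousOn.sub (by fun_prop) (ContinuousOn.log (by fun_prop) ?_)
      intro t ht
      linarith [ht.out]
    · intro t ht
      rw [interior_Ici] at ht
      have ht' : 0 < 1 + t := by linarith [ht.out]
      rw [sub_nonneg, div_le_iff₀ ht']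
      nlinarith [pow_pos ht.out 3]
  have := hmono Set.self_mem_Ici hx hx
  simp only [g] at this
  norm_num at this
  linarith

end Real

lemma hasSum_one_div_pow_succ {a : ℝ} (ha : 1 < a) :
    HasSum (fun j : ℕ => (1 / a) ^ (j + 1)) (1 / (a - 1)) := by
  have ha0 : 0 < a := by linarith
  have h := (hasSum_geometric_of_lt_one (by positivity) ((div_lt_one ha0).2 ha)).mul_left (1 / a)
  have hlimit : 1 / a * (1 - 1 / a)⁻¹ = 1 / (a - 1) := by
    field_simp
  simpa only [← pow_succ', hlimit] using h

lemma hasSum_pow_one_div_pow_succ {γ : ℝ} (hγ : 1 < γ) {k : ℕ} (hk : k ≠ 0) :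
    HasSum (fun j : ℕ => ((1 / γ) ^ (j + 1)) ^ k) (1 / (γ ^ k - 1)) := by
  convert hasSum_one_div_pow_succ (one_lt_pow₀ hγ hk) using 2 with j
  rw [← pow_mul, mul_comm, pow_mul, div_pow, one_pow]

theorem r_gamma_lower_bound_general (γ : ℝ) (hγ : 1 < γ) (r : ℝ)
    (hdef : r * ∏' j : ℕ, (1 + (1 / γ) ^ (j + 1)) = 1) :
    -1 / (γ - 1) + (1 / 2) * (1 / (γ ^ 2 - 1)) - (1 / 3) * (1 / (γ ^ 3 - 1)) ≤ Real.log r ∧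
    Real.exp (-1 / (γ - 1) + (1 / 2) * (1 / (γ ^ 2 - 1)) - (1 / 3) * (1 / (γ ^ 3 - 1))) ≤ r := by
  set x : ℕ → ℝ := fun j => (1 / γ) ^ (j + 1)
  have hx : ∀ j, 0 ≤ x j := fun j => by positivity
  have hsum1 : HasSum x (1 / (γ - 1)) := hasSum_one_div_pow_succ hγ
  have hcubic : HasSum (fun j => x j - x j ^ 2 / 2 + x j ^ 3 / 3)
      (1 / (γ - 1) - 1 / (γ ^ 2 - 1) / 2 + 1 / (γ ^ 3 - 1) / 3) :=
    (hsum1.sub ((hasSum_pow_one_div_pow_succ hγ two_ne_zero).div_const 2)).add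
      ((hasSum_pow_one_div_pow_succ hγ three_ne_zero).div_const 3)
  have hlog_summable := Real.summable_log_one_add_of_summable hsum1.summable
  have hlog_le : ∑' j, log (1 + x j) ≤ 1 / (γ - 1) - 1 / (γ ^ 2 - 1) / 2 + 1 / (γ ^ 3 - 1) / 3 :=
    hcubic.tsum_eq ▸ hlog_summable.tsum_le_tsum (fun j => log_one_add_le_cubic (hx j))
      hcubic.summable
  have hr : r = exp (-∑' j, log (1 + x j)) := by
    rw [exp_neg, rexp_tsum_eq_tprod (fun j => by linarith [hx j]) hlog_summable]
    exact eq_inv_of_mul_eq_one_left hdef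
  have hbound : -1 / (γ - 1) + (1 / 2) * (1 / (γ ^ 2 - 1)) - (1 / 3) * (1 / (γ ^ 3 - 1)) ≤
      -∑' j, log (1 + x j) := by
    rw [neg_div]
    linarith
  rw [hr, log_exp, exp_le_exp]
  exact ⟨hbound, hbound⟩

/-- For `γ > 1`, the number `r_γ` defined by `r_γ ∏_{j=1}^∞ (1 + γ^{−j}) = 1` satisfies
`log r_γ ≥ −1/(γ−1) + (1/2)/(γ²−1) − (1/3)/(γ³−1)`, and hence
`r_γ ≥ exp(−1/(γ−1) + (1/2)/(γ²−1) − (1/3)/(γ³−1))`. -/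
theorem r_gamma_lower_bound (γ : ℝ) (hγ : 1 < γ) (r : ℝ) (hr : 0 < r)
    (hdef : r * ∏' j : ℕ, (1 + (1 / γ) ^ (j + 1)) = 1) :
    -1 / (γ - 1) + (1 / 2) * (1 / (γ ^ 2 - 1)) - (1 / 3) * (1 / (γ ^ 3 - 1)) ≤ Real.log r ∧
    Real.exp (-1 / (γ - 1) + (1 / 2) * (1 / (γ ^ 2 - 1)) - (1 / 3) * (1 / (γ ^ 3 - 1))) ≤ r :=
  r_gamma_lower_bound_general γ hγ r hdef
end

section
/- Self-mapping estimate for the fixed-point iteration: with notation as in the local inversion setup, if for all z in the closed ball of radius η around β one has Σ_{|k|=2} ‖F'(β)^{-1}‖ · (max_{B}|F^{(k)}|/k!) · η^{|k|−1} ≤ 1−σ (the contraction-type bound on the Taylor remainder), then ‖w − F(β)‖ ≤ σηλ_F(β) implies that g_w maps the closed ball cl(B_η(β)) into itself, where λ_F(β) is the smallest singular value of F'(β). -/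
open scoped BigOperators
open Metric

/-!
`g_w(z) - β` is the linear term `F'(β)⁻¹(w - F(β))` minus the quadratic remainder. Since
`λ_F(β) = ‖F'(β)⁻¹‖⁻¹`, the linear term has norm at most `ση`; on the ball every monomial
`(z - β)^α` is at most `η^|α|` in absolute value, so the contraction-type bound makes the
remainder at most `(1 - σ)η`.
-/

/-- The finite set of multiindices `α` on `Fin (m+1)` with `|α| = 2`. -/
noncomputable def multiindicesDegTwo (m : ℕ) : Finset (Fin (m + 1) → ℕ) :=
  ((Finset.univ : Finset (Fin (m + 1) → Fin 3)).image (fun g i => (g i : ℕ))).filter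
    (fun α => ∑ i, α i = 2)

section

variable {𝕜 E F : Type*} [RCLike 𝕜] [NormedAddCommGroup E] [NormedSpace 𝕜 E]
  [NormedAddCommGroup F] [NormedSpace 𝕜 F]

theorem ContinuousLinearMap.norm_apply_le_of_norm_le_mul_inv_norm (L : E →L[𝕜] F)
    (hL : 0 < ‖L‖) {v : E} {c : ℝ} (hv : ‖v‖ ≤ c * ‖L‖⁻¹) : ‖L v‖ ≤ c :=
  calc ‖L v‖ ≤ ‖L‖ * ‖v‖ := L.le_opNorm v
    _ ≤ ‖L‖ * (c * ‖L‖⁻¹) := by gcongr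
    _ = c := by field_simp

theorem EuclideanSpace.norm_prod_pow_apply_le {ι : Type*} [Fintype ι]
    (x : EuclideanSpace 𝕜 ι) (α : ι → ℕ) : ‖∏ i, x i ^ α i‖ ≤ ‖x‖ ^ ∑ i, α i := by
  rw [norm_prod, ← Finset.prod_pow_eq_pow_sum]
  gcongr with i
  rw [norm_pow]
  exact pow_le_pow_left₀ (norm_nonneg _) (PiLp.norm_apply_le x i) _

theorem norm_sum_monomial_smul_le {ι : Type*} [Fintype ι] (s : Finset (ι → ℕ))
    (hs : ∀ α ∈ s, 1 ≤ ∑ i, α i) (L : E →L[𝕜] F) {x : EuclideanSpace 𝕜 ι} {η : ℝ}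
    (hx : ‖x‖ ≤ η) (v : (ι → ℕ) → E) (C : (ι → ℕ) → ℝ) (hv : ∀ α ∈ s, ‖v α‖ ≤ C α) :
    ‖∑ α ∈ s, (∏ i, x i ^ α i) • L (v α)‖ ≤
      (∑ α ∈ s, ‖L‖ * C α * η ^ ((∑ i, α i) - 1)) * η := by
  have hη : 0 ≤ η := (norm_nonneg x).trans hx
  rw [Finset.sum_mul]
  refine (norm_sum_le _ _).trans (Finset.sum_le_sum fun α hα => ?_)
  have hLv : ‖L (v α)‖ ≤ ‖L‖ * C α := (L.le_opNorm _).trans (by gcongr; exact hv α hα)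
  have hmono : ‖∏ i, x i ^ α i‖ ≤ η ^ ∑ i, α i :=
    (EuclideanSpace.norm_prod_pow_apply_le x α).trans (pow_le_pow_left₀ (norm_nonneg _) hx _)
  calc ‖(∏ i, x i ^ α i) • L (v α)‖ = ‖∏ i, x i ^ α i‖ * ‖L (v α)‖ := norm_smul _ _
    _ ≤ η ^ (∑ i, α i) * (‖L‖ * C α) := by gcongr
    _ = ‖L‖ * C α * η ^ ((∑ i, α i) - 1) * η := by
      rw [mul_assoc, ← pow_succ, Nat.sub_add_cancel (hs α hα)]; ring

end

theorem gw_maps_ball_to_ball_general {m : ℕ}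
    (F : EuclideanSpace ℝ (Fin (m + 1)) → EuclideanSpace ℝ (Fin (m + 1)))
    (β : EuclideanSpace ℝ (Fin (m + 1)))
    (A : EuclideanSpace ℝ (Fin (m + 1)) ≃L[ℝ] EuclideanSpace ℝ (Fin (m + 1)))
    (σ : ℝ) (η : ℝ)
    (R : (Fin (m + 1) → ℕ) → EuclideanSpace ℝ (Fin (m + 1)) → EuclideanSpace ℝ (Fin (m + 1)))
    (C : (Fin (m + 1) → ℕ) → ℝ)
    (hR : ∀ α ∈ multiindicesDegTwo m, ∀ z ∈ closedBall β η, ‖R α z‖ ≤ C α)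
    (hsum : ∑ α ∈ multiindicesDegTwo m,
      ‖(A.symm : EuclideanSpace ℝ (Fin (m + 1)) →L[ℝ] EuclideanSpace ℝ (Fin (m + 1)))‖ *
        C α * η ^ ((∑ i, α i) - 1) ≤ 1 - σ)
    (lam : ℝ)
    (hlam : lam =
      ‖(A.symm : EuclideanSpace ℝ (Fin (m + 1)) →L[ℝ] EuclideanSpace ℝ (Fin (m + 1)))‖⁻¹)
    (g : EuclideanSpace ℝ (Fin (m + 1)) → EuclideanSpace ℝ (Fin (m + 1)) →
      EuclideanSpace ℝ (Fin (m + 1)))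
    (hg : ∀ w z, g w z = A.symm (w - F β) + β -
      ∑ α ∈ multiindicesDegTwo m, (∏ i, (z i - β i) ^ α i) • A.symm (R α z)) :
    ∀ w, ‖w - F β‖ ≤ σ * η * lam →
      Set.MapsTo (g w) (closedBall β η) (closedBall β η) := by
  intro w hw z hz
  have hzβ : ‖z - β‖ ≤ η := mem_closedBall_iff_norm.mp hz
  have hlin : ‖A.symm (w - F β)‖ ≤ σ * η :=
    ContinuousLinearMap.norm_apply_le_of_norm_le_mul_inv_norm _ A.norm_symm_pos (hlam ▸ hw)
  have hrem := norm_sum_monomial_smul_le (multiindicesDegTwo m)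
    (fun α hα => by rw [(Finset.mem_filter.mp hα).2]; norm_num) A.symm.toContinuousLinearMap hzβ
    (fun α => R α z) C (fun α hα => hR α hα z hz)
  simp only [PiLp.sub_apply] at hrem
  have hη : 0 ≤ η := (norm_nonneg _).trans hzβ
  rw [mem_closedBall_iff_norm, hg, add_sub_right_comm, add_sub_cancel_right]
  calc _ ≤ σ * η + (1 - σ) * η := (norm_sub_le _ _).trans
          (add_le_add hlin (hrem.trans (by gcongr)))
    _ = η := by ring

/-- Self-mapping estimate for the fixed-point iteration: suppose the order-2 Taylor
remainder coefficients `R_α` of `F` at `β` satisfy `‖R_α(z)‖ ≤ C α` on the closed ball of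
radius `η` around `β` (where `C α` stands for `max_B ‖F^{(α)}‖ / α!`), and suppose the
contraction-type bound `Σ_{|α|=2} ‖F'(β)⁻¹‖ · C α · η^{|α|−1} ≤ 1 − σ` holds. Then for
every `w` with `‖w − F(β)‖ ≤ σ·η·λ_F(β)` (where `λ_F(β) = ‖F'(β)⁻¹‖_op⁻¹` is the smallest
singular value of `F'(β)`), the map
`g_w(z) = F'(β)⁻¹(w − F(β)) + β − Σ_{|α|=2} (z−β)^α • F'(β)⁻¹ R_α(z)`
maps the closed ball `closedBall β η` into itself. -/
theorem gw_maps_ball_to_ball {m : ℕ}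
    (F : EuclideanSpace ℝ (Fin (m + 1)) → EuclideanSpace ℝ (Fin (m + 1)))
    (β : EuclideanSpace ℝ (Fin (m + 1)))
    (A : EuclideanSpace ℝ (Fin (m + 1)) ≃L[ℝ] EuclideanSpace ℝ (Fin (m + 1)))
    (hA : (A : EuclideanSpace ℝ (Fin (m + 1)) →L[ℝ] EuclideanSpace ℝ (Fin (m + 1))) =
      fderiv ℝ F β)
    (σ : ℝ) (hσ : σ ∈ Set.Ioo (0 : ℝ) 1) (η : ℝ) (hη : 0 < η)
    (R : (Fin (m + 1) → ℕ) → EuclideanSpace ℝ (Fin (m + 1)) → EuclideanSpace ℝ (Fin (m + 1)))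
    (C : (Fin (m + 1) → ℕ) → ℝ)
    (hR : ∀ α ∈ multiindicesDegTwo m, ∀ z ∈ closedBall β η, ‖R α z‖ ≤ C α)
    (hsum : ∑ α ∈ multiindicesDegTwo m,
      ‖(A.symm : EuclideanSpace ℝ (Fin (m + 1)) →L[ℝ] EuclideanSpace ℝ (Fin (m + 1)))‖ *
        C α * η ^ ((∑ i, α i) - 1) ≤ 1 - σ)
    (lam : ℝ)
    (hlam : lam =
      ‖(A.symm : EuclideanSpace ℝ (Fin (m + 1)) →L[ℝ] EuclideanSpace ℝ (Fin (m + 1)))‖⁻¹)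
    (g : EuclideanSpace ℝ (Fin (m + 1)) → EuclideanSpace ℝ (Fin (m + 1)) →
      EuclideanSpace ℝ (Fin (m + 1)))
    (hg : ∀ w z, g w z = A.symm (w - F β) + β -
      ∑ α ∈ multiindicesDegTwo m, (∏ i, (z i - β i) ^ α i) • A.symm (R α z)) :
    ∀ w, ‖w - F β‖ ≤ σ * η * lam →
      Set.MapsTo (g w) (closedBall β η) (closedBall β η) :=
  gw_maps_ball_to_ball_general F β A σ η R C hR hsum lam hlam g hg
end
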